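/- Let β ⊆ α be compositions with N = |α|−|β| ≥ 1. Then, as formal power series in the variables x_1, x_2, … with rational coefficients, Σ_{T ∈ SET(α/β)} F_{comp(Des_rdI(T))} = Σ_T x^T, where the right-hand sum runs over all fillings T of the cells of the skew diagram α/β with positive integers such that the entries of every column weakly increase from bottom to top and the entries of every row strictly increase from left to right. (The common value is the row-strict skew extended Schur function RE_{α/β}.) -/

import Mathlib

open scoped Classical

namespace ImmaculateSkew

/-- `part α i` is the `i`-th part (0-indexed) of the composition `α`, or `0` if out of range. -/
def part (α : List ℕ) (i : ℕ) : ℕ := α.getD i 0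

/-- a composition: a list of positive integers -/
def IsComposition (α : List ℕ) : Prop := ∀ x ∈ α, 0 < x

/-- `β ⊆ α` for compositions -/
def SubComp (β α : List ℕ) : Prop :=
  β.length ≤ α.length ∧ ∀ j < β.length, part β j ≤ part α j

/-- cell `(i, j)` (row `i` from the bottom, column `j`, both 0-indexed) lies in the diagram of `α` -/
def InDiagram (α : List ℕ) (c : ℕ × ℕ) : Prop :=
  c.1 < α.length ∧ c.2 < part α c.1

/-- cell lies in the skew diagram `α/β` -/
def InSkew (α β : List ℕ) (c : ℕ × ℕ) : Prop :=
  InDiagram α c ∧ ¬ InDiagram β c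

/-- the finite set of cells of the skew diagram `α/β` -/
noncomputable def skewCells (α β : List ℕ) : Finset (ℕ × ℕ) :=
  (Finset.range α.length ×ˢ Finset.range (α.sum + 1)).filter (InSkew α β)

/-- `N = |α| - |β|` -/
def skewSize (α β : List ℕ) : ℕ := α.sum - β.sum

/-- a filling of the cells of `α/β` using each entry of `E` exactly once, zero off the diagram -/
structure IsStdOn (α β : List ℕ) (E : Finset ℕ) (T : ℕ × ℕ → ℕ) : Prop where
  zero_off : ∀ c, ¬ InSkew α β c → T c = 0
  mem : ∀ c, InSkew α β c → T c ∈ E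
  inj : ∀ c c', InSkew α β c → InSkew α β c' → T c = T c' → c = c'
  surj : ∀ v ∈ E, ∃ c, InSkew α β c ∧ T c = v

/-- row entries strictly increase left to right -/
def RowsStrict (α β : List ℕ) (T : ℕ × ℕ → ℕ) : Prop :=
  ∀ i j j', j < j' → InSkew α β (i, j) → InSkew α β (i, j') → T (i, j) < T (i, j')

/-- row entries weakly increase left to right -/
def RowsWeak (α β : List ℕ) (T : ℕ × ℕ → ℕ) : Prop :=
  ∀ i j j', j < j' → InSkew α β (i, j) → InSkew α β (i, j') → T (i, j) ≤ T (i, j')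

/-- all column entries strictly increase bottom to top -/
def ColsStrict (α β : List ℕ) (T : ℕ × ℕ → ℕ) : Prop :=
  ∀ i i' j, i < i' → InSkew α β (i, j) → InSkew α β (i', j) → T (i, j) < T (i', j)

/-- all column entries weakly increase bottom to top -/
def ColsWeak (α β : List ℕ) (T : ℕ × ℕ → ℕ) : Prop :=
  ∀ i i' j, i < i' → InSkew α β (i, j) → InSkew α β (i', j) → T (i, j) ≤ T (i', j)

/-- the column-1 entries (those in `α/β`) strictly increase bottom to top -/
def FirstColStrict (α β : List ℕ) (T : ℕ × ℕ → ℕ) : Prop :=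
  ∀ i i', i < i' → InSkew α β (i, 0) → InSkew α β (i', 0) → T (i, 0) < T (i', 0)

/-- the column-1 entries (those in `α/β`) weakly increase bottom to top -/
def FirstColWeak (α β : List ℕ) (T : ℕ × ℕ → ℕ) : Prop :=
  ∀ i i', i < i' → InSkew α β (i, 0) → InSkew α β (i', 0) → T (i, 0) ≤ T (i', 0)

/-- standard immaculate tableau of shape `α/β` with entry set `E` -/
def IsSITOn (α β : List ℕ) (E : Finset ℕ) (T : ℕ × ℕ → ℕ) : Prop :=
  IsStdOn α β E T ∧ RowsStrict α β T ∧ FirstColStrict α β T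

/-- standard immaculate tableau of shape `α/β` (entries `1, …, N`) -/
def IsSIT (α β : List ℕ) (T : ℕ × ℕ → ℕ) : Prop :=
  IsSITOn α β (Finset.Icc 1 (skewSize α β)) T

/-- standard extended tableau: all columns increase bottom to top -/
def IsSET (α β : List ℕ) (T : ℕ × ℕ → ℕ) : Prop :=
  IsSIT α β T ∧ ColsStrict α β T

/-- the four descent-set variants -/
inductive Variant | dI | rdI | Astar | Abar

/-- `rowRel a r r'`: the relation required between the row `r` containing `i` and the row `r'`
containing `i+1` for `i` to be an `a`-descent -/
def rowRel : Variant → ℕ → ℕ → Prop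
  | .dI    => fun r r' => r < r'
  | .rdI   => fun r r' => r' ≤ r
  | .Astar => fun r r' => r' < r
  | .Abar  => fun r r' => r ≤ r'

/-- the `a`-descent set of a tableau -/
noncomputable def Des (a : Variant) (α β : List ℕ) (T : ℕ × ℕ → ℕ) : Finset ℕ :=
  (Finset.Icc 1 (skewSize α β - 1)).filter fun k =>
    ∃ c c', InSkew α β c ∧ InSkew α β c' ∧ T c = k ∧ T c' = k + 1 ∧ rowRel a c.1 c'.1

/-- interchange the entries `i` and `i+1` -/
def swapEntries (i : ℕ) (T : ℕ × ℕ → ℕ) : ℕ × ℕ → ℕ :=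
  fun c => if T c = i then i + 1 else if T c = i + 1 then i else T c

/-- the 0-Hecke operator `π_i^a` on `SIT(α/β) ∪ {0}` (the zero function plays the role of `0`) -/
noncomputable def piOp (a : Variant) (α β : List ℕ) (i : ℕ) (T : ℕ × ℕ → ℕ) : ℕ × ℕ → ℕ :=
  if i ∈ Des a α β T then
    (if IsSIT α β (swapEntries i T) then swapEntries i T else fun _ => 0)
  else T

/-- the fundamental quasisymmetric function `F_{comp(D)}` for `D ⊆ {1,…,N-1}`, as a power
series in the variables `x_1, x_2, …` (variable `x_n` is `X n`; `x_0` is unused) -/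
noncomputable def Fund (N : ℕ) (D : Finset ℕ) : MvPowerSeries ℕ ℚ :=
  fun d => (Nat.card {f : Fin N → ℕ //
    (∀ j, 1 ≤ f j) ∧
    (∀ j k : Fin N, j ≤ k → f j ≤ f k) ∧
    (∀ (j : ℕ) (_ : 1 ≤ j) (h2 : j < N), j ∈ D → f ⟨j - 1, by omega⟩ < f ⟨j, h2⟩) ∧
    (∑ j, Finsupp.single (f j) 1) = d} : ℚ)

/-- the generating function `Σ_T x^T` over all fillings of the given cells with positive
integers satisfying the predicate `P` (and equal to `0` off the given cells) -/
noncomputable def genF (cs : Finset (ℕ × ℕ)) (P : (ℕ × ℕ → ℕ) → Prop) :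
    MvPowerSeries ℕ ℚ :=
  fun d => (Nat.card {T : ℕ × ℕ → ℕ //
    (∀ c, c ∉ cs → T c = 0) ∧ (∀ c ∈ cs, 1 ≤ T c) ∧ P T ∧
    (∑ c ∈ cs, Finsupp.single (T c) 1) = d} : ℚ)

/-- complete homogeneous symmetric function `h_r` -/
noncomputable def hFun (r : ℕ) : MvPowerSeries ℕ ℚ :=
  fun d => (Nat.card {f : Fin r → ℕ //
    (∀ j, 1 ≤ f j) ∧ (∀ j k : Fin r, j ≤ k → f j ≤ f k) ∧
    (∑ j, Finsupp.single (f j) 1) = d} : ℚ)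

/-- elementary symmetric function `e_r` -/
noncomputable def eFun (r : ℕ) : MvPowerSeries ℕ ℚ :=
  fun d => (Nat.card {f : Fin r → ℕ //
    (∀ j, 1 ≤ f j) ∧ (∀ j k : Fin r, j < k → f j < f k) ∧
    (∑ j, Finsupp.single (f j) 1) = d} : ℚ)

/-- send a filling to the corresponding basis vector of the free `ℚ`-vector space on
`SIT(α/β)`, or to the zero vector if it is not a standard immaculate tableau -/
noncomputable def toBasis (α β : List ℕ) (U : ℕ × ℕ → ℕ) :
    ({T : ℕ × ℕ → ℕ // IsSIT α β T} →₀ ℚ) :=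
  if h : IsSIT α β U then Finsupp.single ⟨U, h⟩ 1 else 0

/-- the linear extension of `π_i^a` to the free `ℚ`-vector space on `SIT(α/β)` -/
noncomputable def piLin (a : Variant) (α β : List ℕ) (i : ℕ) :
    ({T : ℕ × ℕ → ℕ // IsSIT α β T} →₀ ℚ) →ₗ[ℚ]
      ({T : ℕ × ℕ → ℕ // IsSIT α β T} →₀ ℚ) :=
  Finsupp.lift _ ℚ _ (fun T => toBasis α β (piOp a α β i T.1))

/-- one step: the tableau `T` is obtained from `S` by applying one operator `π_i^a` -/
def stepRel (a : Variant) (α β : List ℕ) (S T : ℕ × ℕ → ℕ) : Prop :=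
  IsSIT α β T ∧ ∃ i, 1 ≤ i ∧ i ≤ skewSize α β - 1 ∧ piOp a α β i S = T

/-- `T` is obtained from `S` by applying a (possibly empty) sequence of operators `π_i^a`,
all intermediate results being tableaux -/
def reach (a : Variant) (α β : List ℕ) : (ℕ × ℕ → ℕ) → (ℕ × ℕ → ℕ) → Prop :=
  Relation.ReflTransGen (stepRel a α β)

/-- the number of skew cells of `α/β` strictly above row `i` other than column-1 cells -/
noncomputable def aboveCount (α β : List ℕ) (i : ℕ) : ℕ :=
  ∑ i' ∈ Finset.Ico (i + 1) α.length,
    (if i' < β.length then part α i' - part β i' else part α i' - 1)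

/-- the tableau `S^0_{α/β}`: the column-1 cells of `α/β` are filled with `1, …, ℓ(α)-ℓ(β)`
bottom to top, then the remaining cells are filled row by row, top to bottom, left to right,
with consecutive integers -/
noncomputable def S0 (α β : List ℕ) : ℕ × ℕ → ℕ :=
  fun c =>
    if InSkew α β c then
      if c.2 = 0 ∧ β.length ≤ c.1 then c.1 - β.length + 1
      else (α.length - β.length) + aboveCount α β c.1 +
        (if c.1 < β.length then c.2 - part β c.1 + 1 else c.2)
    else 0

/-- the row superstandard tableau `S^{row}_{α/β}`: rows filled left to right with `1, 2, …, N`,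
bottom row first -/
noncomputable def Srow (α β : List ℕ) : ℕ × ℕ → ℕ :=
  fun c =>
    if InSkew α β c then
      (∑ i' ∈ Finset.range c.1, (part α i' - part β i')) + (c.2 - part β c.1 + 1)
    else 0

/-- `c` is read before `c'` in the reading word (rows top to bottom, right to left in a row) -/
def readBefore (c c' : ℕ × ℕ) : Prop :=
  c'.1 < c.1 ∨ (c.1 = c'.1 ∧ c'.2 < c.2)

/-- the number of inversions of the reading word of a tableau of shape `α/β` -/
noncomputable def invNum (α β : List ℕ) (T : ℕ × ℕ → ℕ) : ℕ :=
  ((skewCells α β ×ˢ skewCells α β).filter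
    (fun p => readBefore p.1 p.2 ∧ T p.2 < T p.1)).card

/-- `φ_U(T)`: fill the cells of `β` by `U` and those of `α/β` by `T` with all entries of `T`
shifted up by `m = |β|` -/
noncomputable def phiU (α β : List ℕ) (U T : ℕ × ℕ → ℕ) : ℕ × ℕ → ℕ :=
  fun c => if InDiagram β c then U c else if InSkew α β c then T c + β.sum else 0

/-- restriction `T_{≤ m}` of `T` to entries `≤ m` -/
def restrLe (m : ℕ) (T : ℕ × ℕ → ℕ) : ℕ × ℕ → ℕ :=
  fun c => if T c ≤ m then T c else 0

/-- restriction `T_{> m}` of `T` to entries `> m` -/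
def restrGt (m : ℕ) (T : ℕ × ℕ → ℕ) : ℕ × ℕ → ℕ :=
  fun c => if m < T c then T c else 0

/-- standardisation `std(T_{>m})`: keep the entries `> m` and subtract `m` from each -/
def stdGt (m : ℕ) (T : ℕ × ℕ → ℕ) : ℕ × ℕ → ℕ :=
  fun c => if m < T c then T c - m else 0

/-- `T ∈ X_{α,β}`: `T ∈ SIT(α)` and the entries `> |β|` of `T` occupy exactly the cells
of `α/β` -/
def memX (α β : List ℕ) (T : ℕ × ℕ → ℕ) : Prop :=
  IsSIT α [] T ∧ ∀ c, InDiagram α c → (β.sum < T c ↔ ¬ InDiagram β c)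

/-! Standardisation. Number the cells of a filling `U` of `α/β` with weakly increasing columns
and strictly increasing rows by `1, …, N` in increasing order of the pair (entry, row), so that
equal entries are numbered from the bottom row up. This gives `T ∈ SET(α/β)`, and `U = f ∘ T`
for a weakly increasing `f` that increases strictly at every `rdI`-descent of `T`. Conversely,
for such `T` and `f`, if `f` takes the same value on two entries `k < k'` of `T`, there is no
descent in between, so each step `i ↦ i + 1` from `k` to `k'` moves strictly up a row. Hence
`f ∘ T` has strictly increasing rows and its standardisation is `T` again. The bijection
`(T, f) ↦ f ∘ T` matches the coefficients of `x^d` on both sides. -/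

section

open Finset Function

section Cells

lemma part_eq_zero_of_length_le {γ : List ℕ} {i : ℕ} (h : γ.length ≤ i) : part γ i = 0 :=
  List.getD_eq_default γ 0 h

lemma part_le_sum (γ : List ℕ) (i : ℕ) : part γ i ≤ γ.sum := by
  rcases lt_or_ge i γ.length with h | h
  · rw [part, List.getD_eq_getElem γ 0 h]
    exact List.le_sum_of_mem (List.getElem_mem h)
  · rw [part_eq_zero_of_length_le h]
    exact Nat.zero_le _

lemma sum_range_part {γ : List ℕ} {L : ℕ} (hL : γ.length ≤ L) :
    ∑ i ∈ range L, part γ i = γ.sum := by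
  rw [← sum_range_add_sum_Ico _ hL,
    sum_eq_zero fun i hi => part_eq_zero_of_length_le (mem_Ico.1 hi).1, add_zero,
    ← Fin.sum_univ_eq_sum_range, ← List.sum_ofFn]
  congr
  exact List.ext_getElem (by simp) fun i _ _ => by simp [part]

lemma card_filter_inDiagram {γ : List ℕ} {L M : ℕ} (hL : γ.length ≤ L)
    (hM : ∀ i, part γ i ≤ M) :
    #{c ∈ range L ×ˢ range (M + 1) | InDiagram γ c} = γ.sum := by
  rw [card_filter, sum_product, ← sum_range_part hL]
  refine sum_congr rfl fun i _ => ?_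
  rw [← card_filter]
  convert card_range (part γ i) using 2
  ext j
  have := hM i
  rcases lt_or_ge i γ.length with h | h
  · simp only [InDiagram, mem_filter, mem_range, h, true_and]
    omega
  · simp [InDiagram, part_eq_zero_of_length_le h]

lemma mem_skewCells {α β : List ℕ} {c : ℕ × ℕ} : c ∈ skewCells α β ↔ InSkew α β c := by
  simp only [skewCells, mem_filter, mem_product, mem_range, and_iff_right_iff_imp]
  exact fun h => ⟨h.1.1, Nat.lt_succ_of_lt (h.1.2.trans_le (part_le_sum α c.1))⟩

lemma card_skewCells {α β : List ℕ} (hsub : SubComp β α) :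
    #(skewCells α β) = skewSize α β := by
  set box := range α.length ×ˢ range (α.sum + 1)
  have hpart (i : ℕ) : part β i ≤ part α i := by
    rcases lt_or_ge i β.length with h | h
    · exact hsub.2 i h
    · rw [part_eq_zero_of_length_le h]
      exact Nat.zero_le _
  have hsplit : skewCells α β = {c ∈ box | InDiagram α c} \ {c ∈ box | InDiagram β c} := by
    ext c
    simp only [skewCells, InSkew, mem_filter, mem_sdiff]
    tauto
  have hsubset : {c ∈ box | InDiagram β c} ⊆ {c ∈ box | InDiagram α c} := by
    simp only [subset_iff, mem_filter]
    exact fun c ⟨hc, h1, h2⟩ => ⟨hc, h1.trans_le hsub.1, h2.trans_le (hpart _)⟩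
  rw [hsplit, card_sdiff_of_subset hsubset, card_filter_inDiagram le_rfl (part_le_sum α),
    card_filter_inDiagram hsub.1 fun i => (hpart i).trans (part_le_sum α i)]
  rfl

end Cells

section Rank

variable {ι κ : Type*} [LinearOrder κ] {s : Finset ι} {key : ι → κ} {c c' : ι}

def rankBy (s : Finset ι) (key : ι → κ) (c : ι) : ℕ := #{c' ∈ s | key c' ≤ key c}

lemma rankBy_lt_rankBy (hc' : c' ∈ s) (h : key c < key c') :
    rankBy s key c < rankBy s key c' := by
  refine card_lt_card ((ssubset_iff_of_subset fun x hx => ?_).2 ?_)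
  · exact mem_filter.2 ⟨(mem_filter.1 hx).1, (mem_filter.1 hx).2.trans h.le⟩
  · exact ⟨c', mem_filter.2 ⟨hc', le_rfl⟩, fun hx => (mem_filter.1 hx).2.not_gt h⟩

lemma rankBy_lt_rankBy_iff (hinj : Set.InjOn key s) (hc : c ∈ s) (hc' : c' ∈ s) :
    rankBy s key c < rankBy s key c' ↔ key c < key c' := by
  refine ⟨fun h => lt_of_not_ge fun hle => h.not_ge ?_, rankBy_lt_rankBy hc'⟩
  rcases hle.lt_or_eq with hlt | heq
  · exact (rankBy_lt_rankBy hc hlt).le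
  · rw [hinj hc' hc heq]

lemma bijOn_rankBy (hinj : Set.InjOn key s) : Set.BijOn (rankBy s key) s (Icc 1 #s) := by
  have hmaps : Set.MapsTo (rankBy s key) s (Icc 1 #s) := fun c hc =>
    mem_Icc.2 ⟨card_pos.2 ⟨c, mem_filter.2 ⟨hc, le_rfl⟩⟩, card_filter_le _ _⟩
  have hinjOn : Set.InjOn (rankBy s key) s := fun c hc c' hc' h => by
    rcases lt_trichotomy (key c) (key c') with hlt | heq | hlt
    · exact absurd h (rankBy_lt_rankBy hc' hlt).ne
    · exact hinj hc hc' heq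
    · exact absurd h (rankBy_lt_rankBy hc hlt).ne'
  exact ⟨hmaps, hinjOn, surjOn_of_injOn_of_card_le _ hmaps hinjOn (by simp)⟩

lemma eq_rankBy {T : ι → ℕ} (hT : Set.BijOn T s (Icc 1 #s))
    (hkey : ∀ c ∈ s, ∀ c' ∈ s, T c < T c' → key c < key c') (hc : c ∈ s) :
    T c = rankBy s key c := by
  have hfilter : {c' ∈ s | key c' ≤ key c} = {c' ∈ s | T c' ≤ T c} := by
    refine filter_congr fun c' hc' => ⟨fun hle => not_lt.1 fun hlt =>
      (hkey c hc c' hc' hlt).not_ge hle, fun hle => ?_⟩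
    rcases hle.lt_or_eq with hlt | heq
    · exact (hkey c' hc' c hc hlt).le
    · rw [hT.injOn hc' hc heq]
  have hTc := mem_Icc.1 (hT.mapsTo hc)
  have hcard : #{c' ∈ s | T c' ≤ T c} = #(Icc 1 (T c)) := by
    refine card_nbij T (fun c' hc' => ?_) (hT.injOn.mono (filter_subset _ _)) fun k hk => ?_
    · exact mem_Icc.2 ⟨(mem_Icc.1 (hT.mapsTo (mem_filter.1 hc').1)).1, (mem_filter.1 hc').2⟩
    · have hk := mem_Icc.1 hk
      obtain ⟨c', hc', rfl⟩ := hT.surjOn (mem_Icc.2 ⟨hk.1, hk.2.trans hTc.2⟩)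
      exact ⟨c', mem_filter.2 ⟨hc', hk.2⟩, rfl⟩
  rw [rankBy, hfilter, hcard, Nat.card_Icc, Nat.add_sub_cancel]

end Rank

section Standard

variable {α β : List ℕ} {E : Finset ℕ} {T : ℕ × ℕ → ℕ} {c : ℕ × ℕ} {v : ℕ}

lemma IsStdOn.bijOn (hT : IsStdOn α β E T) : Set.BijOn T (skewCells α β) E :=
  ⟨fun c hc => hT.mem c (mem_skewCells.1 hc),
    fun c hc c' hc' h => hT.inj c c' (mem_skewCells.1 hc) (mem_skewCells.1 hc') h,
    fun v hv => let ⟨c, hc, hcv⟩ := hT.surj v hv; ⟨c, mem_skewCells.2 hc, hcv⟩⟩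

lemma IsStdOn.of_bijOn (hzero : ∀ c, ¬ InSkew α β c → T c = 0)
    (hT : Set.BijOn T (skewCells α β) E) : IsStdOn α β E T where
  zero_off := hzero
  mem _ hc := hT.mapsTo (mem_skewCells.2 hc)
  inj _ _ hc hc' h := hT.injOn (mem_skewCells.2 hc) (mem_skewCells.2 hc') h
  surj _ hv := let ⟨c, hc, hcv⟩ := hT.surjOn hv; ⟨c, mem_skewCells.1 hc, hcv⟩

lemma IsStdOn.invFunOn_mem (hT : IsStdOn α β E T) (hv : v ∈ E) :
    InSkew α β (invFunOn T (skewCells α β) v) :=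
  mem_skewCells.1 (Function.invFunOn_mem (hT.bijOn.surjOn hv))

lemma IsStdOn.apply_invFunOn (hT : IsStdOn α β E T) (hv : v ∈ E) :
    T (invFunOn T (skewCells α β) v) = v :=
  hT.bijOn.invOn_invFunOn.2 hv

lemma IsStdOn.invFunOn_apply (hT : IsStdOn α β E T) (hc : InSkew α β c) :
    invFunOn T (skewCells α β) (T c) = c :=
  hT.bijOn.invOn_invFunOn.1 (mem_skewCells.2 hc)

end Standard

section Relabel

variable {α β : List ℕ} {T U : ℕ × ℕ → ℕ} {g : ℕ → ℕ} {c c' : ℕ × ℕ}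

noncomputable def mapEntries (α β : List ℕ) (T : ℕ × ℕ → ℕ) (g : ℕ → ℕ) : ℕ × ℕ → ℕ :=
  fun c => if InSkew α β c then g (T c) else 0

lemma mapEntries_of_inSkew (hc : InSkew α β c) : mapEntries α β T g c = g (T c) := if_pos hc

def rowKey (U : ℕ × ℕ → ℕ) (c : ℕ × ℕ) : ℕ ×ₗ ℕ := toLex (U c, c.1)

structure DesCompatible (α β : List ℕ) (T : ℕ × ℕ → ℕ) (g : ℕ → ℕ) : Prop where
  monotoneOn : MonotoneOn g (Icc 1 (skewSize α β))
  lt_succ_of_mem_des : ∀ k ∈ Des .rdI α β T, g k < g (k + 1)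

lemma row_lt_of_apply_eq_succ (hT : IsStdOn α β (Icc 1 (skewSize α β)) T)
    (hg : DesCompatible α β T g) (hc : InSkew α β c) (hc' : InSkew α β c')
    (hsucc : T c' = T c + 1) (heq : g (T c) = g (T c')) : c.1 < c'.1 := by
  by_contra hrow
  have h1 := mem_Icc.1 (hT.mem c hc)
  have h2 := mem_Icc.1 (hT.mem c' hc')
  have hdes : T c ∈ Des .rdI α β T :=
    mem_filter.2 ⟨mem_Icc.2 ⟨h1.1, by omega⟩, c, c', hc, hc', rfl, hsucc, not_lt.1 hrow⟩
  exact (hg.lt_succ_of_mem_des _ hdes).ne (hsucc ▸ heq)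

lemma row_lt_of_lt_of_apply_eq (hT : IsStdOn α β (Icc 1 (skewSize α β)) T)
    (hg : DesCompatible α β T g) (hc : InSkew α β c) (hc' : InSkew α β c')
    (hlt : T c < T c') (heq : g (T c) = g (T c')) : c.1 < c'.1 := by
  obtain ⟨m, hm⟩ : ∃ m, T c' = T c + m + 1 := ⟨T c' - T c - 1, by omega⟩
  induction m generalizing c' with
  | zero => exact row_lt_of_apply_eq_succ hT hg hc hc' hm heq
  | succ m ih =>
    have h1 := mem_Icc.1 (hT.mem c hc)
    have h2 := mem_Icc.1 (hT.mem c' hc')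
    have hv : T c + m + 1 ∈ Icc 1 (skewSize α β) := mem_Icc.2 ⟨by omega, by omega⟩
    have hc'' := hT.invFunOn_mem hv
    have hTc'' := hT.apply_invFunOn hv
    have hle₁ := hg.monotoneOn (hT.mem c hc) (hT.mem _ hc'') (by omega)
    have hle₂ := hg.monotoneOn (hT.mem _ hc'') (hT.mem c' hc') (by omega)
    exact (ih hc'' (by omega) (by omega) hTc'').trans
      (row_lt_of_apply_eq_succ hT hg hc'' hc' (by omega) (by omega))

lemma rowKey_mapEntries_lt (hT : IsStdOn α β (Icc 1 (skewSize α β)) T)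
    (hg : DesCompatible α β T g) (hc : InSkew α β c) (hc' : InSkew α β c')
    (hlt : T c < T c') : rowKey (mapEntries α β T g) c < rowKey (mapEntries α β T g) c' := by
  rw [rowKey, rowKey, Prod.Lex.toLex_lt_toLex, mapEntries_of_inSkew hc, mapEntries_of_inSkew hc']
  rcases (hg.monotoneOn (hT.mem c hc) (hT.mem c' hc') hlt.le).lt_or_eq with h | h
  · exact Or.inl h
  · exact Or.inr ⟨h, row_lt_of_lt_of_apply_eq hT hg hc hc' hlt h⟩

lemma rowsStrict_mapEntries (hT : IsSET α β T) (hg : DesCompatible α β T g) :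
    RowsStrict α β (mapEntries α β T g) := fun i j j' hjj hc hc' =>
  (Prod.Lex.toLex_lt_toLex.1 (rowKey_mapEntries_lt hT.1.1 hg hc hc'
    (hT.1.2.1 i j j' hjj hc hc'))).resolve_right fun h => lt_irrefl i h.2

lemma colsWeak_mapEntries (hT : IsSET α β T) (hg : DesCompatible α β T g) :
    ColsWeak α β (mapEntries α β T g) := fun i i' j hii hc hc' =>
  Prod.Lex.monotone_fst _ _ (rowKey_mapEntries_lt hT.1.1 hg hc hc' (hT.2 i i' j hii hc hc')).le

lemma injOn_rowKey (hrow : RowsStrict α β U) : Set.InjOn (rowKey U) (skewCells α β) := by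
  rintro ⟨i, j⟩ hc ⟨i', j'⟩ hc' h
  obtain ⟨hU, rfl⟩ : U (i, j) = U (i', j') ∧ i = i' := Prod.mk.inj (toLex.injective h)
  rw [mem_coe, mem_skewCells] at hc hc'
  rcases lt_trichotomy j j' with hj | rfl | hj
  · exact absurd hU (hrow i j j' hj hc hc').ne
  · rfl
  · exact absurd hU (hrow i j' j hj hc' hc).ne'

noncomputable def std (α β : List ℕ) (U : ℕ × ℕ → ℕ) : ℕ × ℕ → ℕ :=
  fun c => if InSkew α β c then rankBy (skewCells α β) (rowKey U) c else 0

lemma std_of_inSkew (hc : InSkew α β c) : std α β U c = rankBy (skewCells α β) (rowKey U) c :=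
  if_pos hc

lemma std_lt_std_iff (hrow : RowsStrict α β U) (hc : InSkew α β c) (hc' : InSkew α β c') :
    std α β U c < std α β U c' ↔ rowKey U c < rowKey U c' := by
  rw [std_of_inSkew hc, std_of_inSkew hc']
  exact rankBy_lt_rankBy_iff (injOn_rowKey hrow) (mem_skewCells.2 hc) (mem_skewCells.2 hc')

lemma isStdOn_std (hsub : SubComp β α) (hrow : RowsStrict α β U) :
    IsStdOn α β (Icc 1 (skewSize α β)) (std α β U) := by
  refine .of_bijOn (fun c hc => if_neg hc) ?_
  rw [← card_skewCells hsub]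
  exact (bijOn_rankBy (injOn_rowKey hrow)).congr
    fun c hc => (std_of_inSkew (mem_skewCells.1 hc)).symm

lemma isSET_std (hsub : SubComp β α) (hrow : RowsStrict α β U) (hcol : ColsWeak α β U) :
    IsSET α β (std α β U) := by
  have hcolStrict : ColsStrict α β (std α β U) := fun i i' j hii hc hc' =>
    (std_lt_std_iff hrow hc hc').2 <| Prod.Lex.toLex_lt_toLex.2 <|
      (hcol i i' j hii hc hc').lt_or_eq.imp_right fun h => ⟨h, hii⟩
  exact ⟨⟨isStdOn_std hsub hrow, fun i j j' hjj hc hc' => (std_lt_std_iff hrow hc hc').2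
    (Prod.Lex.toLex_lt_toLex.2 (Or.inl (hrow i j j' hjj hc hc'))),
    fun i i' hii => hcolStrict i i' 0 hii⟩, hcolStrict⟩

lemma std_mapEntries (hsub : SubComp β α) (hT : IsStdOn α β (Icc 1 (skewSize α β)) T)
    (hg : DesCompatible α β T g) : std α β (mapEntries α β T g) = T := by
  funext c
  by_cases hc : InSkew α β c
  · rw [std_of_inSkew hc]
    refine (eq_rankBy (card_skewCells hsub ▸ hT.bijOn) (fun c hc c' hc' hlt => ?_)
      (mem_skewCells.2 hc)).symm
    exact rowKey_mapEntries_lt hT hg (mem_skewCells.1 hc) (mem_skewCells.1 hc') hlt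
  · rw [std, if_neg hc, hT.zero_off c hc]

noncomputable def valueAt (α β : List ℕ) (U : ℕ × ℕ → ℕ) (k : ℕ) : ℕ :=
  U (invFunOn (std α β U) (skewCells α β) k)

lemma desCompatible_valueAt (hsub : SubComp β α) (hrow : RowsStrict α β U) :
    DesCompatible α β (std α β U) (valueAt α β U) := by
  have hT := isStdOn_std hsub hrow
  have hkey {k k' : ℕ} (hk : k ∈ Icc 1 (skewSize α β)) (hk' : k' ∈ Icc 1 (skewSize α β))
      (hlt : k < k') : rowKey U (invFunOn (std α β U) (skewCells α β) k) <
        rowKey U (invFunOn (std α β U) (skewCells α β) k') := by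
    rwa [← std_lt_std_iff hrow (hT.invFunOn_mem hk) (hT.invFunOn_mem hk'), hT.apply_invFunOn hk,
      hT.apply_invFunOn hk']
  refine ⟨fun k hk k' hk' hle => ?_, fun k hdes => ?_⟩
  · rcases hle.lt_or_eq with hlt | rfl
    · exact Prod.Lex.monotone_fst _ _ (hkey hk hk' hlt).le
    · exact le_rfl
  · obtain ⟨hk, c, c', hc, hc', hck, hc'k, hrow'⟩ := mem_filter.1 hdes
    have hk := mem_Icc.1 hk
    have h := hkey (mem_Icc.2 ⟨hk.1, by omega⟩) (mem_Icc.2 ⟨by omega, by omega⟩) (Nat.lt_add_one k)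
    rw [← hc'k, ← hck, hT.invFunOn_apply hc, hT.invFunOn_apply hc', rowKey, rowKey,
      Prod.Lex.toLex_lt_toLex] at h
    rw [valueAt, valueAt, ← hc'k, ← hck, hT.invFunOn_apply hc, hT.invFunOn_apply hc']
    exact h.resolve_right fun h => absurd hrow' (not_le.2 h.2)

lemma mapEntries_std_valueAt (hsub : SubComp β α) (hrow : RowsStrict α β U)
    (hzero : ∀ c, ¬ InSkew α β c → U c = 0) :
    mapEntries α β (std α β U) (valueAt α β U) = U := by
  funext c
  by_cases hc : InSkew α β c
  · rw [mapEntries_of_inSkew hc, valueAt, (isStdOn_std hsub hrow).invFunOn_apply hc]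
  · rw [mapEntries, if_neg hc, hzero c hc]

lemma mapEntries_congr {E : Finset ℕ} {g' : ℕ → ℕ} (hT : IsStdOn α β E T)
    (h : Set.EqOn g g' E) : mapEntries α β T g = mapEntries α β T g' := by
  funext c
  by_cases hc : InSkew α β c
  · rw [mapEntries_of_inSkew hc, mapEntries_of_inSkew hc, h (hT.mem c hc)]
  · rw [mapEntries, mapEntries, if_neg hc, if_neg hc]

end Relabel

section Counting

variable {N : ℕ}

def atEntry (f : Fin N → ℕ) (k : ℕ) : ℕ := if h : k - 1 < N then f ⟨k - 1, h⟩ else 0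

lemma atEntry_of_mem_Icc (f : Fin N → ℕ) {k : ℕ} (hk : k ∈ Icc 1 N) :
    atEntry f k = f ⟨k - 1, by have := mem_Icc.1 hk; omega⟩ :=
  dif_pos _

lemma atEntry_succ (f : Fin N → ℕ) (j : Fin N) : atEntry f (j + 1) = f j := by
  simp [atEntry]

lemma atEntry_eqOn (g : ℕ → ℕ) : Set.EqOn (atEntry fun j : Fin N => g (j + 1)) g (Icc 1 N) := by
  intro k hk
  have hk := mem_Icc.1 hk
  rw [atEntry_of_mem_Icc _ (mem_Icc.2 hk), Nat.sub_add_cancel hk.1]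

lemma monotoneOn_atEntry {f : Fin N → ℕ} (hf : Monotone f) :
    MonotoneOn (atEntry f) (Icc 1 N) := fun k hk k' hk' hle => by
  rw [atEntry_of_mem_Icc f hk, atEntry_of_mem_Icc f hk']
  exact hf (Fin.mk_le_mk.2 (by omega))

def FundSeq (N : ℕ) (D : Finset ℕ) (d : ℕ →₀ ℕ) (f : Fin N → ℕ) : Prop :=
  (∀ j, 1 ≤ f j) ∧ (∀ j k : Fin N, j ≤ k → f j ≤ f k) ∧
    (∀ (j : ℕ) (_ : 1 ≤ j) (h2 : j < N), j ∈ D → f ⟨j - 1, by omega⟩ < f ⟨j, h2⟩) ∧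
    (∑ j, Finsupp.single (f j) 1) = d

lemma coeff_fund (N : ℕ) (D : Finset ℕ) (d : ℕ →₀ ℕ) :
    MvPowerSeries.coeff d (Fund N D) = Nat.card {f // FundSeq N D d f} := rfl

def GenFFilling (cs : Finset (ℕ × ℕ)) (P : (ℕ × ℕ → ℕ) → Prop) (d : ℕ →₀ ℕ)
    (U : ℕ × ℕ → ℕ) : Prop :=
  (∀ c, c ∉ cs → U c = 0) ∧ (∀ c ∈ cs, 1 ≤ U c) ∧ P U ∧
    (∑ c ∈ cs, Finsupp.single (U c) 1) = d

lemma coeff_genF (cs : Finset (ℕ × ℕ)) (P : (ℕ × ℕ → ℕ) → Prop) (d : ℕ →₀ ℕ) :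
    MvPowerSeries.coeff d (genF cs P) = Nat.card {U // GenFFilling cs P d U} := rfl

lemma mem_support_sum_single {ι : Type*} (s : Finset ι) (f : ι → ℕ) {i : ι} (hi : i ∈ s) :
    f i ∈ (∑ j ∈ s, Finsupp.single (f j) 1).support := by
  rw [Finsupp.mem_support_iff, Finsupp.finsetSum_apply]
  exact (sum_pos' (fun _ _ => Nat.zero_le _) ⟨i, hi, by simp⟩).ne'

lemma finite_fundSeq (N : ℕ) (D : Finset ℕ) (d : ℕ →₀ ℕ) : Finite {f // FundSeq N D d f} := by
  refine Set.Finite.to_subtype ((Set.Finite.pi fun _ => d.support.finite_toSet).subset ?_)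
  rintro f ⟨-, -, -, rfl⟩ j -
  exact mem_support_sum_single _ f (mem_univ j)

lemma finite_isSET (α β : List ℕ) : Finite {T // IsSET α β T} := by
  refine Set.Finite.to_subtype (Set.Finite.of_finite_image
    (f := fun T (c : skewCells α β) => T c) ?_ fun T hT T' hT' h => ?_)
  · refine (Set.Finite.pi fun _ => (Icc 1 (skewSize α β)).finite_toSet).subset ?_
    rintro _ ⟨T, hT, rfl⟩ c -
    exact hT.1.1.mem c (mem_skewCells.1 c.2)
  · funext c
    by_cases hc : InSkew α β c
    · exact congrFun h ⟨c, mem_skewCells.2 hc⟩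
    · rw [hT.1.1.zero_off c hc, hT'.1.1.zero_off c hc]

variable {α β : List ℕ} {T : ℕ × ℕ → ℕ} {d : ℕ →₀ ℕ}

lemma sum_single_mapEntries_atEntry (hT : IsStdOn α β (Icc 1 (skewSize α β)) T)
    (f : Fin (skewSize α β) → ℕ) :
    ∑ c ∈ skewCells α β, Finsupp.single (mapEntries α β T (atEntry f) c) 1 =
      ∑ j, Finsupp.single (f j) 1 := by
  calc ∑ c ∈ skewCells α β, Finsupp.single (mapEntries α β T (atEntry f) c) 1
      = ∑ k ∈ Icc 1 (skewSize α β), Finsupp.single (atEntry f k) 1 := by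
        refine sum_nbij T (fun c hc => hT.bijOn.mapsTo hc) hT.bijOn.injOn hT.bijOn.surjOn
          fun c hc => ?_
        rw [mapEntries_of_inSkew (mem_skewCells.1 hc)]
    _ = ∑ j, Finsupp.single (f j) 1 := by
        rw [← Ico_add_one_right_eq_Icc, sum_Ico_eq_sum_range, Nat.add_sub_cancel,
          ← Fin.sum_univ_eq_sum_range]
        simp_rw [add_comm 1, atEntry_succ]

lemma desCompatible_atEntry {f : Fin (skewSize α β) → ℕ}
    (hf : FundSeq (skewSize α β) (Des .rdI α β T) d f) : DesCompatible α β T (atEntry f) := by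
  refine ⟨monotoneOn_atEntry hf.2.1, fun k hk => ?_⟩
  have hk' := mem_Icc.1 (mem_filter.1 hk).1
  rw [atEntry_of_mem_Icc f (mem_Icc.2 ⟨hk'.1, by omega⟩),
    (atEntry_succ f ⟨k, by omega⟩ : atEntry f (k + 1) = _)]
  exact hf.2.2.1 k hk'.1 (by omega) hk

lemma genFFilling_mapEntries (hT : IsSET α β T) {f : Fin (skewSize α β) → ℕ}
    (hf : FundSeq (skewSize α β) (Des .rdI α β T) d f) :
    GenFFilling (skewCells α β) (fun U => ColsWeak α β U ∧ RowsStrict α β U) d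
      (mapEntries α β T (atEntry f)) := by
  have hg := desCompatible_atEntry hf
  refine ⟨fun c hc => if_neg (mt mem_skewCells.2 hc), fun c hc => ?_,
    ⟨colsWeak_mapEntries hT hg, rowsStrict_mapEntries hT hg⟩,
    (sum_single_mapEntries_atEntry hT.1.1 f).trans hf.2.2.2⟩
  rw [mapEntries_of_inSkew (mem_skewCells.1 hc),
    atEntry_of_mem_Icc f (hT.1.1.mem c (mem_skewCells.1 hc))]
  exact hf.1 _

variable (α β) in
noncomputable def fillOf (d : ℕ →₀ ℕ) :
    (Σ T : {T // IsSET α β T}, {f // FundSeq (skewSize α β) (Des .rdI α β T) d f}) →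
      {U // GenFFilling (skewCells α β) (fun U => ColsWeak α β U ∧ RowsStrict α β U) d U} :=
  fun p => ⟨mapEntries α β p.1 (atEntry p.2), genFFilling_mapEntries p.1.2 p.2.2⟩

lemma fillOf_injective (hsub : SubComp β α) (d : ℕ →₀ ℕ) : Injective (fillOf α β d) := by
  rintro ⟨⟨T, hT⟩, f, hf⟩ ⟨⟨T', hT'⟩, f', hf'⟩ h
  have hU : mapEntries α β T (atEntry f) = mapEntries α β T' (atEntry f') :=
    congrArg Subtype.val h
  obtain rfl : T = T' := by
    rw [← std_mapEntries hsub hT.1.1 (desCompatible_atEntry hf), hU,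
      std_mapEntries hsub hT'.1.1 (desCompatible_atEntry hf')]
  obtain rfl : f = f' := funext fun j => by
    have hv : (j : ℕ) + 1 ∈ Icc 1 (skewSize α β) := mem_Icc.2 ⟨by omega, j.2⟩
    have hc := hT.1.1.invFunOn_mem hv
    have := congrFun hU (invFunOn T (skewCells α β) (j + 1))
    rwa [mapEntries_of_inSkew hc, mapEntries_of_inSkew hc, hT.1.1.apply_invFunOn hv,
      atEntry_succ, atEntry_succ] at this
  rfl

lemma fillOf_surjective (hsub : SubComp β α) (d : ℕ →₀ ℕ) : Surjective (fillOf α β d) := by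
  rintro ⟨U, hzero, hpos, ⟨hcol, hrow⟩, hwt⟩
  have hT := isSET_std hsub hrow hcol
  have hg := desCompatible_valueAt hsub hrow
  set f : Fin (skewSize α β) → ℕ := fun j => valueAt α β U (j + 1)
  have hrecover : mapEntries α β (std α β U) (atEntry f) = U :=
    (mapEntries_congr hT.1.1 (atEntry_eqOn _)).trans
      (mapEntries_std_valueAt hsub hrow fun c hc => hzero c (mt mem_skewCells.1 hc))
  have hv (j : Fin (skewSize α β)) : (j : ℕ) + 1 ∈ Icc 1 (skewSize α β) :=
    mem_Icc.2 ⟨by omega, j.2⟩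
  refine ⟨⟨⟨std α β U, hT⟩, f, fun j => ?_, fun j k hjk => ?_, fun j hj1 hj2 hj => ?_, ?_⟩,
    Subtype.ext hrecover⟩
  · exact hpos _ (mem_skewCells.2 (hT.1.1.invFunOn_mem (hv j)))
  · exact hg.monotoneOn (hv j) (hv k) (by simpa using hjk)
  · show valueAt α β U (j - 1 + 1) < valueAt α β U (j + 1)
    rw [Nat.sub_add_cancel hj1]
    exact hg.lt_succ_of_mem_des j hj
  · rw [← sum_single_mapEntries_atEntry hT.1.1 f, hrecover, hwt]

end Counting

end

theorem skew_rowstrict_extended_schur_general (α β : List ℕ) (hsub : SubComp β α) :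
    (∑ᶠ (T : ℕ × ℕ → ℕ) (_ : IsSET α β T), Fund (skewSize α β) (Des .rdI α β T)) =
      genF (skewCells α β) (fun T => ColsWeak α β T ∧ RowsStrict α β T) := by
  have := finite_isSET α β
  have := Fintype.ofFinite {T // IsSET α β T}
  ext d
  have (T : {T // IsSET α β T}) := finite_fundSeq (skewSize α β) (Des .rdI α β T.1) d
  rw [← finsum_subtype_eq_finsum_cond, finsum_eq_sum_of_fintype, map_sum, coeff_genF]
  simp only [coeff_fund]
  rw [← Nat.cast_sum, ← Nat.card_sigma, Nat.card_congr
    (Equiv.ofBijective _ ⟨fillOf_injective hsub d, fillOf_surjective hsub d⟩)]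

/-- the row-strict skew extended Schur function `RE_{α/β}`:
`Σ_{T ∈ SET(α/β)} F_{comp(Des_rdI(T))}` equals the generating function of all fillings of
`α/β` with weakly increasing columns and strictly increasing rows. -/
theorem skew_rowstrict_extended_schur (α β : List ℕ)
    (hα : IsComposition α) (hβ : IsComposition β) (hsub : SubComp β α)
    (hN : 1 ≤ skewSize α β) :
    (∑ᶠ (T : ℕ × ℕ → ℕ) (_ : IsSET α β T), Fund (skewSize α β) (Des .rdI α β T)) =
      genF (skewCells α β) (fun T => ColsWeak α β T ∧ RowsStrict α β T) :=
  skew_rowstrict_extended_schur_general α β hsub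

end ImmaculateSkew
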